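/- arXiv:2605.23638 — 4 statements merged into one kernel-verified Lean document; each statement's English description precedes it below -/
import Mathlib

section
/- For the canonical centers a, b, c and fixed radii r₁, r₂, r₃, the size of the triple sphere intersection satisfies |V_{r₁}(a) ∩ V_{r₂}(b) ∩ V_{r₃}(c)| = Σ_{a₁=0}^{t} C(t,a₁)·C(t,a₂)·C(t,a₃)·C(n−3t,a₄), where a₂ = (r₁+2t−r₂−2a₁)/2, a₃ = (r₁+2t−r₃−2a₁)/2, a₄ = (2a₁+r₂+r₃−4t)/2, and a summand is interpreted as 0 whenever the corresponding a₂, a₃, a₄ are not nonnegative integers within the block sizes. -/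
/-- Hamming sphere of radius `s` around `x`, as a finset. -/
def hSphere (n s : ℕ) (x : Fin n → Bool) : Finset (Fin n → Bool) :=
  Finset.univ.filter (fun y => hammingDist x y = s)

/-!
Split the coordinates into the blocks `[0,t)`, `[t,2t)`, `[2t,3t)`, `[3t,n)`, on each of which
`a`, `b` and `c` are constant. The three distances from `y` then depend only on the numbers
`w₀, w₁, w₂, w₃` of ones of `y` in these blocks:
`d(a,y) = w₀ + w₁ + w₂ + w₃`, `d(b,y) = (t - w₀) + (t - w₁) + w₂ + w₃`,
`d(c,y) = (t - w₀) + w₁ + (t - w₂) + w₃`,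
and exactly `C(t,w₀) C(t,w₁) C(t,w₂) C(n-3t,w₃)` words have these block weights. Summing over
the block weights, the three sphere conditions become the linear system in the summation.
-/

open Finset

section BlockWeight

variable {ι κ : Type*} [Fintype ι] [DecidableEq κ] (f : ι → κ)

def blockWeight (y : ι → Bool) (k : κ) : ℕ := #{i | f i = k ∧ y i = true}

lemma blockWeight_le (y : ι → Bool) (k : κ) : blockWeight f y k ≤ #{i | f i = k} :=
  card_le_card (monotone_filter_right _ fun _ _ h => h.1)

variable [Fintype κ]

lemma hammingDist_comp_eq_sum_blockWeight (g : κ → Bool) (y : ι → Bool) :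
    hammingDist (fun i => g (f i)) y =
      ∑ k, if g k then #{i | f i = k} - blockWeight f y k else blockWeight f y k := by
  rw [hammingDist,
    card_eq_sum_card_fiberwise (f := f) (t := univ) fun _ _ => mem_coe.2 (mem_univ _)]
  refine sum_congr rfl fun k _ => ?_
  rw [filter_filter]
  cases hk : g k
  · congr 1; ext i; simp only [mem_filter]; grind
  · rw [← card_filter_add_card_filter_not (s := {i | f i = k}) (fun i => y i = true),
      filter_filter, blockWeight, add_tsub_cancel_left]
    congr 1; ext i; simp only [mem_filter]; grind

lemma card_filter_blockWeight_eq [DecidableEq ι] (w : κ → ℕ) :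
    #{y : ι → Bool | blockWeight f y = w} = ∏ k, (#{i | f i = k}).choose (w k) := by
  simp_rw [← card_powersetCard, ← Fintype.card_piFinset]
  have support_indicator : ∀ s : κ → Finset ι, (∀ k, s k ⊆ ({i | f i = k} : Finset ι)) →
      (fun k => ({i | f i = k ∧ decide (i ∈ s (f i)) = true} : Finset ι)) = s := by
    intro s hs
    funext k; ext i
    simp only [mem_filter, mem_univ, true_and, decide_eq_true_eq]
    have hfk {i : ι} (h : i ∈ s k) : f i = k := (mem_filter.1 (hs k h)).2
    exact ⟨fun ⟨hi, h⟩ => hi ▸ h, fun h => ⟨hfk h, hfk h ▸ h⟩⟩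
  refine card_nbij' (fun y k => {i | f i = k ∧ y i = true}) (fun s i => decide (i ∈ s (f i)))
    ?_ ?_ ?_ ?_
  · intro y hy
    simp only [coe_filter, mem_univ, true_and, Set.mem_ofPred_eq, mem_coe, Fintype.mem_piFinset,
      mem_powersetCard] at hy ⊢
    exact fun k => ⟨monotone_filter_right _ fun _ _ h => h.1, congrFun hy k⟩
  · intro s hs
    simp only [coe_filter, mem_univ, true_and, Set.mem_ofPred_eq, mem_coe, Fintype.mem_piFinset,
      mem_powersetCard] at hs ⊢
    funext k
    rw [blockWeight, ← (hs k).2, ← congrFun (support_indicator s fun k => (hs k).1) k]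
  · intro y _
    funext i
    simp
  · intro s hs
    simp only [mem_coe, Fintype.mem_piFinset, mem_powersetCard] at hs
    exact support_indicator s fun k => (hs k).1

end BlockWeight

def tripleBlock (t i : ℕ) : Fin 4 :=
  if i < t then 0 else if i < 2 * t then 1 else if i < 3 * t then 2 else 3

lemma card_filter_fin_eq_card_filter_range {n : ℕ} (p : ℕ → Prop) [DecidablePred p] :
    #{i : Fin n | p i} = #{m ∈ range n | p m} := by
  rw [← image_fin_univ, filter_image, card_image_of_injective _ Fin.val_injective]

lemma card_filter_range_eq_of_iff_Ico {n l u : ℕ} (hu : u ≤ n) (p : ℕ → Prop)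
    [DecidablePred p] (hp : ∀ m < n, p m ↔ l ≤ m ∧ m < u) : #{m ∈ range n | p m} = u - l := by
  rw [← Nat.card_Ico]
  congr 1
  ext m
  simp only [mem_filter, mem_range, mem_Ico]
  constructor
  · exact fun h => (hp m h.1).1 h.2
  · exact fun h => ⟨by omega, (hp m (by omega)).2 h⟩

lemma card_filter_tripleBlock_eq {n t : ℕ} (ht : 3 * t ≤ n) (k : Fin 4) :
    #{i : Fin n | tripleBlock t i = k} = ![t, t, t, n - 3 * t] k := by
  rw [card_filter_fin_eq_card_filter_range (tripleBlock t · = k)]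
  fin_cases k
  · exact (card_filter_range_eq_of_iff_Ico (l := 0) (u := t) (by omega) _ fun m _ => by
      unfold tripleBlock; split_ifs <;> simp <;> omega)
  · exact (card_filter_range_eq_of_iff_Ico (l := t) (u := 2 * t) (by omega) _ fun m _ => by
      unfold tripleBlock; split_ifs <;> simp <;> omega).trans (by simp; omega)
  · exact (card_filter_range_eq_of_iff_Ico (l := 2 * t) (u := 3 * t) (by omega) _ fun m _ => by
      unfold tripleBlock; split_ifs <;> simp <;> omega).trans (by simp; omega)
  · exact card_filter_range_eq_of_iff_Ico (l := 3 * t) (u := n) le_rfl _ fun m _ => by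
      unfold tripleBlock; split_ifs <;> simp <;> omega

def tripleWeight (n t : ℕ) (y : Fin n → Bool) : Fin 4 → ℕ :=
  blockWeight (fun i : Fin n => tripleBlock t i) y

lemma tripleWeight_le {n t : ℕ} (ht : 3 * t ≤ n) (y : Fin n → Bool) (k : Fin 4) :
    tripleWeight n t y k ≤ ![t, t, t, n - 3 * t] k :=
  card_filter_tripleBlock_eq ht k ▸ blockWeight_le _ y k

lemma mem_hSphere_inter_iff_tripleWeight {n t : ℕ} (ht : 3 * t ≤ n) (r₁ r₂ r₃ : ℕ)
    (y : Fin n → Bool) :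
    y ∈ hSphere n r₁ (fun _ => false) ∩ hSphere n r₂ (fun i : Fin n => decide ((i : ℕ) < 2 * t)) ∩
        hSphere n r₃ (fun i : Fin n =>
          decide ((i : ℕ) < t ∨ (2 * t ≤ (i : ℕ) ∧ (i : ℕ) < 3 * t))) ↔
      let w := tripleWeight n t y
      w 0 + w 1 + w 2 + w 3 = r₁ ∧ (t - w 0) + (t - w 1) + w 2 + w 3 = r₂ ∧
        (t - w 0) + w 1 + (t - w 2) + w 3 = r₃ := by
  have b_eq : (fun i : Fin n => decide ((i : ℕ) < 2 * t)) =
      fun i : Fin n => ![true, true, false, false] (tripleBlock t i) := by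
    funext i; unfold tripleBlock; split_ifs <;> simp <;> omega
  have c_eq : (fun i : Fin n => decide ((i : ℕ) < t ∨ (2 * t ≤ (i : ℕ) ∧ (i : ℕ) < 3 * t))) =
      fun i : Fin n => ![true, false, true, false] (tripleBlock t i) := by
    funext i; unfold tripleBlock; split_ifs <;> simp <;> omega
  have hdist (g : Fin 4 → Bool) : hammingDist (fun i : Fin n => g (tripleBlock t i)) y =
      ∑ k, if g k then ![t, t, t, n - 3 * t] k - tripleWeight n t y k
        else tripleWeight n t y k := by
    simp_rw [tripleWeight, hammingDist_comp_eq_sum_blockWeight, card_filter_tripleBlock_eq ht]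
  simp only [hSphere, mem_inter, mem_filter, mem_univ, true_and]
  rw [b_eq, c_eq, hdist, hdist, hdist (fun _ => false)]
  simp [Fin.sum_univ_four, and_assoc]

lemma card_filter_tripleWeight_eq {n t : ℕ} (ht : 3 * t ≤ n) {r₁ r₂ r₃ : ℕ}
    {S : Finset (Fin n → Bool)}
    (hS : ∀ y, y ∈ S ↔
      let w := tripleWeight n t y
      w 0 + w 1 + w 2 + w 3 = r₁ ∧ (t - w 0) + (t - w 1) + w 2 + w 3 = r₂ ∧
        (t - w 0) + w 1 + (t - w 2) + w 3 = r₃)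
    (a₁ a₂ a₃ a₄ : ℕ) :
    #{y ∈ S | (tripleWeight n t y 0, tripleWeight n t y 1, tripleWeight n t y 2,
        tripleWeight n t y 3) = (a₁, a₂, a₃, a₄)} =
      if (2 * a₂ : ℤ) = r₁ + 2 * t - r₂ - 2 * a₁ ∧
         (2 * a₃ : ℤ) = r₁ + 2 * t - r₃ - 2 * a₁ ∧
         (2 * a₄ : ℤ) = 2 * a₁ + r₂ + r₃ - 4 * t
      then Nat.choose t a₁ * Nat.choose t a₂ * Nat.choose t a₃ * Nat.choose (n - 3 * t) a₄
      else 0 := by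
  have hle := tripleWeight_le ht
  split_ifs with h
  · calc _ = #{y | blockWeight (fun i : Fin n => tripleBlock t i) y = ![a₁, a₂, a₃, a₄]} := by
          refine congrArg Finset.card (Finset.ext fun y => ?_)
          have h0 := hle y 0; have h1 := hle y 1; have h2 := hle y 2
          simp [hS, tripleWeight, funext_iff, Fin.forall_fin_succ] at h0 h1 h2 ⊢
          omega
      _ = ∏ k, (#{i : Fin n | tripleBlock t i = k}).choose (![a₁, a₂, a₃, a₄] k) :=
          card_filter_blockWeight_eq _ _
      _ = _ := by simp [Fin.prod_univ_four, card_filter_tripleBlock_eq ht]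
  · rw [card_eq_zero, filter_eq_empty_iff]
    intro y hyS hfib
    have h0 := hle y 0; have h1 := hle y 1; have h2 := hle y 2
    simp only [hS] at hyS
    simp only [Prod.mk.injEq] at hfib
    simp at h0 h1 h2
    omega

theorem triple_sphere_intersection_count (n t : ℕ) (ht : 3 * t ≤ n)
    (a b c : Fin n → Bool)
    (ha : a = fun _ => false)
    (hb : b = fun i : Fin n => decide ((i : ℕ) < 2 * t))
    (hc : c = fun i : Fin n => decide ((i : ℕ) < t ∨ (2 * t ≤ (i : ℕ) ∧ (i : ℕ) < 3 * t)))
    (r₁ r₂ r₃ : ℕ) :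
    (hSphere n r₁ a ∩ hSphere n r₂ b ∩ hSphere n r₃ c).card =
      ∑ a₁ ∈ Finset.range (t + 1), ∑ a₂ ∈ Finset.range (t + 1),
        ∑ a₃ ∈ Finset.range (t + 1), ∑ a₄ ∈ Finset.range (n - 3 * t + 1),
          if (2 * a₂ : ℤ) = r₁ + 2 * t - r₂ - 2 * a₁ ∧
             (2 * a₃ : ℤ) = r₁ + 2 * t - r₃ - 2 * a₁ ∧
             (2 * a₄ : ℤ) = 2 * a₁ + r₂ + r₃ - 4 * t
          then Nat.choose t a₁ * Nat.choose t a₂ * Nat.choose t a₃ *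
               Nat.choose (n - 3 * t) a₄
          else 0 := by
  subst ha hb hc
  have weights_mem (y : Fin n → Bool) :
      (tripleWeight n t y 0, tripleWeight n t y 1, tripleWeight n t y 2, tripleWeight n t y 3) ∈
        range (t + 1) ×ˢ range (t + 1) ×ˢ range (t + 1) ×ˢ range (n - 3 * t + 1) := by
    have hle := tripleWeight_le ht y
    simp only [mem_product, mem_range, Order.lt_add_one_iff]
    exact ⟨hle 0, hle 1, hle 2, hle 3⟩
  rw [card_eq_sum_card_fiberwise fun y _ => weights_mem y]
  simp only [sum_product]
  refine sum_congr rfl fun a₁ _ => sum_congr rfl fun a₂ _ => sum_congr rfl fun a₃ _ =>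
    sum_congr rfl fun a₄ _ => ?_
  exact card_filter_tripleWeight_eq ht (mem_hSphere_inter_iff_tripleWeight ht r₁ r₂ r₃) _ _ _ _
end

section
/- Let x, y ∈ {0,1}ⁿ with d(x,y) = k, and fix integers r₁, r₂. Then |V_{r₁}(x) ∩ V_{r₂}(y)| = C(k, (k + r₁ − r₂)/2) · C(n−k, (r₁ + r₂ − k)/2) when k + r₁ − r₂ and r₁ + r₂ − k are both even and the binomial arguments lie in range, and the intersection is empty otherwise. -/
open Finset
open scoped symmDiff

namespace Finset

variable {α : Type*} [DecidableEq α]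

theorem card_symmDiff_add_card_inter (s t : Finset α) :
    #(s ∆ t) + #(s ∩ t) = #t + #(s \ t) := by
  rw [symmDiff_def, sup_eq_union, card_union_of_disjoint disjoint_sdiff_sdiff, inter_comm,
    ← card_sdiff_add_card_inter t s]
  omega

theorem union_inter_eq_and_union_sdiff_eq {A B S : Finset α} (hA : A ⊆ S) (hB : Disjoint B S) :
    (A ∪ B) ∩ S = A ∧ (A ∪ B) \ S = B := by
  rw [union_inter_distrib_right, inter_eq_left.2 hA, disjoint_iff_inter_eq_empty.1 hB, union_empty,
    union_sdiff_distrib, sdiff_eq_empty_iff_subset.2 hA, empty_union, hB.sdiff_eq_left]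
  exact ⟨rfl, rfl⟩

variable [Fintype α]

theorem card_filter_card_inter_card_sdiff (S : Finset α) (a b : ℕ) :
    #{D : Finset α | #(D ∩ S) = a ∧ #(D \ S) = b} =
      (#S).choose a * (Fintype.card α - #S).choose b := by
  calc _ = #(S.powersetCard a ×ˢ Sᶜ.powersetCard b) := by
        refine card_nbij' (fun D => (D ∩ S, D \ S)) (fun p => p.1 ∪ p.2) ?_ ?_ ?_ ?_
        · intro D hD
          simp only [mem_coe, mem_filter, mem_univ, true_and] at hD
          simp only [mem_coe, mem_product, mem_powersetCard, subset_compl_iff_disjoint_right]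
          exact ⟨⟨inter_subset_right, hD.1⟩, sdiff_disjoint, hD.2⟩
        · rintro ⟨A, B⟩ hAB
          simp only [mem_coe, mem_product, mem_powersetCard, subset_compl_iff_disjoint_right] at hAB
          obtain ⟨⟨hAS, rfl⟩, hBS, rfl⟩ := hAB
          obtain ⟨hA, hB⟩ := union_inter_eq_and_union_sdiff_eq hAS hBS
          simp [hA, hB]
        · intro D _
          exact sup_inf_sdiff D S
        · rintro ⟨A, B⟩ hAB
          simp only [mem_coe, mem_product, mem_powersetCard, subset_compl_iff_disjoint_right] at hAB
          obtain ⟨hA, hB⟩ := union_inter_eq_and_union_sdiff_eq hAB.1.1 hAB.2.1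
          simp [hA, hB]
    _ = _ := by rw [card_product, card_powersetCard, card_powersetCard, card_compl]

theorem card_filter_card_eq_card_symmDiff_eq (S : Finset α) {r₁ r₂ a b : ℕ}
    (ha : #S + r₁ = r₂ + 2 * a) (hb : r₁ + r₂ = #S + 2 * b) :
    #{D : Finset α | #D = r₁ ∧ #(D ∆ S) = r₂} =
      (#S).choose a * (Fintype.card α - #S).choose b := by
  rw [← card_filter_card_inter_card_sdiff]
  congr 1
  refine filter_congr fun D _ => ?_
  have := card_inter_add_card_sdiff D S
  have := card_symmDiff_add_card_inter D S
  omega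

theorem card_sdiff_le_card_sub_card (s t : Finset α) : #(s \ t) ≤ Fintype.card α - #t := by
  have := card_sdiff_add_card s t
  have := card_le_univ (s ∪ t)
  omega

end Finset

section Hamming

variable {ι : Type*} [Fintype ι] [DecidableEq ι]

def disagreementEquiv (x : ι → Bool) : (ι → Bool) ≃ Finset ι where
  toFun z := {i | x i ≠ z i}
  invFun D i := xor (x i) (decide (i ∈ D))
  left_inv z := by
    funext i
    cases hx : x i <;> cases hz : z i <;> simp [hx, hz]
  right_inv D := by
    ext i
    cases x i <;> by_cases i ∈ D <;> simp_all

theorem hammingDist_eq_card_disagreementEquiv (x z : ι → Bool) :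
    hammingDist x z = #(disagreementEquiv x z) := rfl

theorem disagreementEquiv_eq_symmDiff (x y z : ι → Bool) :
    disagreementEquiv y z = disagreementEquiv x z ∆ disagreementEquiv x y := by
  ext i
  simp only [disagreementEquiv, Equiv.coe_fn_mk, mem_symmDiff, mem_filter, mem_univ, true_and]
  cases x i <;> cases y i <;> cases z i <;> simp

end Hamming

theorem card_hSphere_inter_hSphere (n r₁ r₂ : ℕ) (x y : Fin n → Bool) :
    #(hSphere n r₁ x ∩ hSphere n r₂ y) =
      #{D : Finset (Fin n) | #D = r₁ ∧ #(D ∆ disagreementEquiv x y) = r₂} := by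
  refine card_equiv (disagreementEquiv x) fun z => ?_
  simp only [hSphere, mem_inter, mem_filter, mem_univ, true_and]
  rw [hammingDist_eq_card_disagreementEquiv, hammingDist_eq_card_disagreementEquiv,
    disagreementEquiv_eq_symmDiff x y z]

theorem two_sphere_intersection_count (n k r₁ r₂ : ℕ) (x y : Fin n → Bool)
    (hxy : hammingDist x y = k) :
    (hSphere n r₁ x ∩ hSphere n r₂ y).card =
      if (2 : ℤ) ∣ ((k : ℤ) + r₁ - r₂) ∧ (2 : ℤ) ∣ ((r₁ : ℤ) + r₂ - k) ∧
         0 ≤ (k : ℤ) + r₁ - r₂ ∧ ((k : ℤ) + r₁ - r₂) / 2 ≤ k ∧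
         0 ≤ (r₁ : ℤ) + r₂ - k ∧ ((r₁ : ℤ) + r₂ - k) / 2 ≤ (n : ℤ) - k
      then Nat.choose k (((k : ℤ) + r₁ - r₂) / 2).toNat *
           Nat.choose (n - k) (((r₁ : ℤ) + r₂ - k) / 2).toNat
      else 0 := by
  rw [card_hSphere_inter_hSphere]
  have hS : #(disagreementEquiv x y) = k := hxy
  generalize disagreementEquiv x y = S at hS ⊢
  have hk : k ≤ n := hS ▸ (card_le_univ S).trans_eq (Fintype.card_fin n)
  split_ifs with hc
  · rw [card_filter_card_eq_card_symmDiff_eq S (a := (((k : ℤ) + r₁ - r₂) / 2).toNat)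
      (b := (((r₁ : ℤ) + r₂ - k) / 2).toNat) (by omega) (by omega), hS, Fintype.card_fin]
  · rw [card_eq_zero, filter_eq_empty_iff]
    rintro D - ⟨rfl, rfl⟩
    have hsplit := card_inter_add_card_sdiff D S
    have hsymm := card_symmDiff_add_card_inter D S
    have hin := card_le_card (inter_subset_right (s₁ := D) (s₂ := S))
    have hout := card_sdiff_le_card_sub_card D S
    rw [Fintype.card_fin] at hout
    refine hc ⟨?_, ?_, ?_, ?_, ?_, ?_⟩ <;> omega
end

section
/- Define Φ_{α,β}(θ,δ) = (β/2)·H(2θ/β) + β·H((ρ⋆ + β − δ − 2θ)/β) + (1 − 3β/2)·H((θ + δ − β)/(1 − 3β/2)), where ρ⋆ = min{α, δ + 2θ − β/2}. If β = 2α with 0 < β < 2/3, then the only feasible point (θ,δ) with all three entropy arguments in [0,1], δ ≤ α, and 0 ≤ ρ⋆ ≤ α is θ = β/2, δ = β/2, and at this point Φ_{α,β}(θ,δ) = 0; hence f₃(α,2α) = 0. -/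
/-- The binary entropy function with natural logarithm (`Real.log 0 = 0` gives
`H 0 = H 1 = 0`). -/
noncomputable def binEnt (p : ℝ) : ℝ := -p * Real.log p - (1 - p) * Real.log (1 - p)

/-- The optimized normalized distance `ρ⋆ = min{α, δ + 2θ − β/2}`. -/
noncomputable def rhoStar (α β θ δ : ℝ) : ℝ := min α (δ + 2 * θ - β / 2)

/-- The rate function `Φ_{α,β}(θ,δ)`. -/
noncomputable def Phi (α β θ δ : ℝ) : ℝ :=
  (β / 2) * binEnt (2 * θ / β) +
  β * binEnt ((rhoStar α β θ δ + β - δ - 2 * θ) / β) +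
  (1 - 3 * β / 2) * binEnt ((θ + δ - β) / (1 - 3 * β / 2))

/-- The feasible set `D_{α,β}`. -/
def Feasible (α β θ δ : ℝ) : Prop :=
  0 ≤ δ ∧ δ ≤ α ∧ 0 ≤ rhoStar α β θ δ ∧ rhoStar α β θ δ ≤ α ∧
  0 ≤ 2 * θ / β ∧ 2 * θ / β ≤ 1 ∧
  0 ≤ (rhoStar α β θ δ + β - δ - 2 * θ) / β ∧
  (rhoStar α β θ δ + β - δ - 2 * θ) / β ≤ 1 ∧
  0 ≤ (θ + δ - β) / (1 - 3 * β / 2) ∧ (θ + δ - β) / (1 - 3 * β / 2) ≤ 1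

lemma binEnt_zero : binEnt 0 = 0 := by simp [binEnt]

lemma binEnt_one : binEnt 1 = 0 := by simp [binEnt]

section

variable {α β θ δ : ℝ}

lemma rhoStar_half_half (hβ : 0 ≤ β) : rhoStar (β / 2) β (β / 2) (β / 2) = β / 2 :=
  min_eq_left (by linarith)

/-- With `α ≤ β/2`, the box constraints give `θ, δ ≤ β/2` while the third entropy
argument being nonnegative gives `θ + δ ≥ β`. -/
lemma Feasible.eq_half (hβ0 : 0 < β) (hβ1 : β < 2 / 3) (hα : 2 * α ≤ β)
    (h : Feasible α β θ δ) : θ = β / 2 ∧ δ = β / 2 := by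
  obtain ⟨-, hδ, -, -, -, hθ, -, -, hsum, -⟩ := h
  have hθ : θ ≤ β / 2 := by
    have := (div_le_one hβ0).mp hθ
    linarith
  have hsum : β ≤ θ + δ := by
    have := (div_nonneg_iff.mp hsum).resolve_right (fun h => by linarith [h.2])
    linarith [this.1]
  constructor <;> linarith

lemma Phi_half_half (hβ : 0 < β) : Phi (β / 2) β (β / 2) (β / 2) = 0 := by
  have h1 : 2 * (β / 2) / β = 1 := by field_simp
  have h2 : β / 2 + β - β / 2 - 2 * (β / 2) = 0 := by ring
  have h3 : β / 2 + β / 2 - β = 0 := by ring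
  rw [Phi, rhoStar_half_half hβ.le, h1, h2, h3, zero_div, zero_div, binEnt_zero, binEnt_one]
  ring

lemma feasible_half_half (hβ : 0 < β) : Feasible (β / 2) β (β / 2) (β / 2) := by
  have h1 : 2 * (β / 2) / β = 1 := by field_simp
  have h2 : β / 2 + β - β / 2 - 2 * (β / 2) = 0 := by ring
  have h3 : β / 2 + β / 2 - β = 0 := by ring
  rw [Feasible, rhoStar_half_half hβ.le, h1, h2, h3, zero_div, zero_div]
  refine ⟨?_, le_rfl, ?_, le_rfl, zero_le_one, le_rfl, le_rfl, zero_le_one, le_rfl, zero_le_one⟩ <;>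
    linarith

end

theorem critical_boundary_rate_zero (α β : ℝ) (hβ0 : 0 < β) (hβ1 : β < 2 / 3)
    (hcrit : β = 2 * α) :
    (∀ θ δ : ℝ, Feasible α β θ δ → θ = β / 2 ∧ δ = β / 2) ∧
    Phi α β (β / 2) (β / 2) = 0 ∧
    sSup {y : ℝ | ∃ θ δ : ℝ, Feasible α β θ δ ∧ y = Phi α β θ δ} = 0 := by
  obtain rfl : α = β / 2 := by linarith
  have hunique (θ δ : ℝ) (h : Feasible (β / 2) β θ δ) : θ = β / 2 ∧ δ = β / 2 :=
    h.eq_half hβ0 hβ1 (by linarith)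
  refine ⟨hunique, Phi_half_half hβ0, ?_⟩
  have hvalues : {y : ℝ | ∃ θ δ : ℝ, Feasible (β / 2) β θ δ ∧ y = Phi (β / 2) β θ δ} = {0} := by
    refine Set.eq_singleton_iff_unique_mem.2
      ⟨⟨β / 2, β / 2, feasible_half_half hβ0, (Phi_half_half hβ0).symm⟩, ?_⟩
    rintro _ ⟨θ, δ, h, rfl⟩
    obtain ⟨rfl, rfl⟩ := hunique θ δ h
    exact Phi_half_half hβ0
  rw [hvalues, csSup_singleton]
end

section
/- Let k = 2t, r = t + C for a fixed integer C ≥ 0, and let a = 0ⁿ, b = 1^{2t}0^{n-2t}, c = 1^t0^t1^t0^{n-3t} with 3t ≤ n. Then |B_{t+C}(a) ∩ B_{t+C}(b) ∩ B_{t+C}(c)| = O(n^{3C}) as n → ∞, i.e., there is a constant K depending only on C such that the intersection size is at most K·n^{3C} for all sufficiently large n. -/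
/-- Hamming ball of radius `r` around `x`, as a finset. -/
def hBall (n r : ℕ) (x : Fin n → Bool) : Finset (Fin n → Bool) :=
  Finset.univ.filter (fun y => hammingDist x y ≤ r)

/-!
Proof idea: on every coordinate where the three centres are not all equal, each word `y`
disagrees with at least one of them, and with two of them if `y` also disagrees with their
majority. Summing over coordinates, `d(a,y) + d(b,y) + d(c,y) ≥ s + d(m,y)`, where `m` is the
coordinatewise majority of `a, b, c` and `s` is the number of coordinates where they are not all
equal. For the given centres `s = 3t` and `m = 1^t 0^(n-t)`, so the triple intersection of balls
of radius `t + C` lies in the ball of radius `3C` around `m`, which has at most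
`(3C + 1) n^(3C)` points.
-/

open Finset

section Median

variable {ι : Type*} [Fintype ι]

def median3 (x y z : ι → Bool) : ι → Bool :=
  fun i => (x i && y i) || (y i && z i) || (z i && x i)

theorem card_nonconstant_add_hammingDist_median3_le (x y z v : ι → Bool) :
    #{i | ¬(x i = y i ∧ y i = z i)} + hammingDist (median3 x y z) v ≤
      hammingDist x v + hammingDist y v + hammingDist z v := by
  simp only [hammingDist, card_filter, ← sum_add_distrib]
  refine sum_le_sum fun i _ => ?_
  unfold median3
  cases x i <;> cases y i <;> cases z i <;> cases v i <;> decide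

end Median

theorem hBall_inter_subset_hBall_median3 {n r : ℕ} (x y z : Fin n → Bool) :
    hBall n r x ∩ hBall n r y ∩ hBall n r z ⊆
      hBall n (3 * r - #{i | ¬(x i = y i ∧ y i = z i)}) (median3 x y z) := by
  intro v hv
  simp only [hBall, mem_inter, mem_filter, mem_univ, true_and] at hv ⊢
  have := card_nonconstant_add_hammingDist_median3_le x y z v
  omega

theorem card_hBall_le {n : ℕ} (hn : 1 ≤ n) (r : ℕ) (x : Fin n → Bool) :
    #(hBall n r x) ≤ (r + 1) * n ^ r := by
  let flips : (Fin n → Bool) → Finset (Fin n) := fun y => {i | x i ≠ y i}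
  have h_maps : ∀ y ∈ hBall n r x,
      flips y ∈ (range (r + 1)).biUnion fun k => powersetCard k (univ : Finset (Fin n)) := by
    intro y hy
    simp only [hBall, mem_filter, mem_univ, true_and] at hy
    simp only [mem_biUnion, mem_range, mem_powersetCard]
    exact ⟨_, Nat.lt_succ_of_le hy, subset_univ _, rfl⟩
  have h_inj : Set.InjOn flips (hBall n r x) := by
    intro y₁ _ y₂ _ h
    funext i
    have hi := Finset.ext_iff.mp h i
    simp only [flips, mem_filter, mem_univ, true_and] at hi
    revert hi
    cases x i <;> cases y₁ i <;> cases y₂ i <;> decide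
  calc #(hBall n r x)
      ≤ #((range (r + 1)).biUnion fun k => powersetCard k (univ : Finset (Fin n))) :=
        card_le_card_of_injOn flips h_maps h_inj
    _ ≤ ∑ k ∈ range (r + 1), #(powersetCard k (univ : Finset (Fin n))) := card_biUnion_le
    _ ≤ ∑ _k ∈ range (r + 1), n ^ r := by
        refine sum_le_sum fun k hk => ?_
        rw [card_powersetCard, card_univ, Fintype.card_fin]
        exact (Nat.choose_le_pow n k).trans
          (Nat.pow_le_pow_right hn (Nat.lt_succ_iff.mp (mem_range.mp hk)))
    _ = (r + 1) * n ^ r := by rw [sum_const, card_range, smul_eq_mul]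

section CriticalWindow

variable {n : ℕ} (t : ℕ)

theorem median3_critical_window :
    median3 (fun _ : Fin n => false) (fun i => decide ((i : ℕ) < 2 * t))
        (fun i => decide ((i : ℕ) < t ∨ (2 * t ≤ (i : ℕ) ∧ (i : ℕ) < 3 * t))) =
      fun i : Fin n => decide ((i : ℕ) < t) := by
  funext i
  unfold median3
  by_cases h₁ : (i : ℕ) < t <;> by_cases h₂ : (i : ℕ) < 2 * t <;>
    by_cases h₃ : (i : ℕ) < 3 * t <;> simp [h₁, h₂, h₃] <;> omega

theorem card_nonconstant_critical_window (ht : 3 * t ≤ n) :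
    #{i : Fin n | ¬((false : Bool) = decide ((i : ℕ) < 2 * t) ∧
      decide ((i : ℕ) < 2 * t) = decide ((i : ℕ) < t ∨ (2 * t ≤ (i : ℕ) ∧ (i : ℕ) < 3 * t)))} =
      3 * t := by
  have h_set : ∀ i : Fin n, ¬((false : Bool) = decide ((i : ℕ) < 2 * t) ∧
      decide ((i : ℕ) < 2 * t) = decide ((i : ℕ) < t ∨ (2 * t ≤ (i : ℕ) ∧ (i : ℕ) < 3 * t))) ↔
      (i : ℕ) < 3 * t := by
    intro i
    by_cases h₁ : (i : ℕ) < t <;> by_cases h₂ : (i : ℕ) < 2 * t <;>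
      by_cases h₃ : (i : ℕ) < 3 * t <;> simp [h₁, h₂, h₃] <;> omega
  simp only [h_set, Fin.card_filter_val_lt]
  omega

end CriticalWindow

theorem critical_window_polynomial_bound (C : ℕ) :
    ∃ K N₀ : ℕ, ∀ n : ℕ, N₀ ≤ n → ∀ t : ℕ, 3 * t ≤ n →
      ∀ a b c : Fin n → Bool,
        a = (fun _ => false) →
        b = (fun i : Fin n => decide ((i : ℕ) < 2 * t)) →
        c = (fun i : Fin n => decide ((i : ℕ) < t ∨ (2 * t ≤ (i : ℕ) ∧ (i : ℕ) < 3 * t))) →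
        (hBall n (t + C) a ∩ hBall n (t + C) b ∩ hBall n (t + C) c).card ≤
          K * n ^ (3 * C) := by
  refine ⟨3 * C + 1, 1, fun n hn t ht a b c ha hb hc => ?_⟩
  subst ha hb hc
  have h_radius : 3 * (t + C) - 3 * t = 3 * C := by omega
  calc _ ≤ #(hBall n (3 * C) fun i => decide ((i : ℕ) < t)) := by
        refine card_le_card ((hBall_inter_subset_hBall_median3 _ _ _).trans ?_)
        rw [card_nonconstant_critical_window t ht, median3_critical_window, h_radius]
    _ ≤ (3 * C + 1) * n ^ (3 * C) := card_hBall_le hn _ _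
end
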